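/- For every fixed n ≥ 1, the function f(x) = μ({ω ∈ (0,1) irrational : a_k(ω) = x for some 1 ≤ k ≤ n}) is nonincreasing in x ∈ ℕ; that is, if x < y then f(x) ≥ f(y), where μ is the Gauss measure. -/

import Mathlib

open MeasureTheory Filter

/-- The Gauss map `T(x) = 1/x mod 1`. -/
noncomputable def gaussMap (x : ℝ) : ℝ := Int.fract (1 / x)

/-- The `n`-th partial quotient (indexed from `0`): `a_{n+1}(ω) = ⌊1 / T^n(ω)⌋`. -/
noncomputable def cfDigit (n : ℕ) (ω : ℝ) : ℕ := ⌊1 / (gaussMap^[n] ω)⌋₊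

/-- The Gauss measure on `(0,1)`, with density `1/((log 2)(1+t))` w.r.t. Lebesgue. -/
noncomputable def gaussMeasure : Measure ℝ :=
  (volume.restrict (Set.Ioo (0 : ℝ) 1)).withDensity
    (fun t => ENNReal.ofReal (1 / (Real.log 2 * (1 + t))))

/-- The cylinder `I(a_1, …, a_n)`: irrationals in `(0,1)` whose continued fraction
expansion begins with `a_1, …, a_n`. -/
def cylinder (n : ℕ) (a : Fin n → ℕ) : Set ℝ :=
  {ω | ω ∈ Set.Ioo (0 : ℝ) 1 ∧ Irrational ω ∧ ∀ i : Fin n, cfDigit i ω = a i}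

/-!
Up to the null set of rationals, the points whose first `n` partial quotients avoid `j` form the
disjoint union of the cylinders `I(a)` over tuples `a ∈ (ℕ≥1 ∖ {j})ⁿ`, so the hitting probability
of `j` is `1 - ∑ μ(I(a))`. Replacing every digit `y` by `x` maps the tuples avoiding `x` injectively
to tuples avoiding `y` and lowers digits, while `μ(I(a))` is antitone in each digit: up to rationals
`I(a)` is the interval between `u = p/q` and `v = (p + p')/(q + q')`, where `p/q` and `p'/q'` are
the last two convergents, and `p q' - p' q = ±1` makes `q (q + q') (1 + u)` and
`q (q + q') (1 + v)` consecutive integers, so `μ(I(a)) = log (1 + 1/m) / log 2` with `m` the smaller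
of them, which grows with every digit.
-/

open Set Function Real

lemma gaussMap_natCast_add_inv {k : ℕ} {t : ℝ} (ht : t ∈ Ico 0 1) :
    gaussMap ((k + t)⁻¹) = t := by
  rw [gaussMap, one_div, inv_inv, add_comm, Int.fract_add_natCast, Int.fract_eq_self.2 ht]

lemma cfDigit_zero_natCast_add_inv {k : ℕ} {t : ℝ} (ht : t ∈ Ico 0 1) :
    cfDigit 0 ((k + t)⁻¹) = k := by
  rw [cfDigit, iterate_zero_apply, one_div, inv_inv, add_comm, Nat.floor_add_natCast ht.1,
    Nat.floor_eq_zero.2 ht.2, zero_add]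

lemma cfDigit_succ (n : ℕ) (ω : ℝ) : cfDigit (n + 1) ω = cfDigit n (gaussMap ω) := by
  rw [cfDigit, cfDigit, iterate_succ_apply]

lemma cfDigit_zero_add_gaussMap_inv {ω : ℝ} (hω : 0 ≤ ω) :
    ((cfDigit 0 ω : ℝ) + gaussMap ω)⁻¹ = ω := by
  rw [cfDigit, gaussMap, iterate_zero_apply, natCast_floor_eq_intCast_floor (by positivity),
    Int.floor_add_fract, one_div, inv_inv]

lemma irrational_gaussMap {ω : ℝ} (h : Irrational ω) : Irrational (gaussMap ω) := by
  rw [gaussMap, Int.fract, one_div]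
  exact h.inv.sub_intCast _

lemma gaussMap_mem_Ioo {ω : ℝ} (h : Irrational ω) : gaussMap ω ∈ Ioo 0 1 :=
  ⟨(Int.fract_nonneg _).lt_of_ne (irrational_gaussMap h).ne_zero.symm, Int.fract_lt_one _⟩

lemma one_le_cfDigit {ω : ℝ} (hω : ω ∈ Ioo 0 1) (hirr : Irrational ω) (n : ℕ) :
    1 ≤ cfDigit n ω := by
  induction n generalizing ω with
  | zero =>
    rw [cfDigit, iterate_zero_apply]
    exact Nat.le_floor (by simpa using one_le_one_div hω.1 hω.2.le)
  | succ n ih => rw [cfDigit_succ]; exact ih (gaussMap_mem_Ioo hirr) (irrational_gaussMap hirr)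

lemma measurable_cfDigit (n : ℕ) : Measurable (cfDigit n) :=
  Nat.measurable_floor.comp <| measurable_const.div <|
    ((measurable_fract.comp (measurable_const.div measurable_id)).iterate n)

lemma cylinder_succ {n : ℕ} (a : Fin (n + 1) → ℕ) (ha : 1 ≤ a 0) :
    cylinder (n + 1) a = (fun t => ((a 0 : ℝ) + t)⁻¹) '' cylinder n (Fin.tail a) := by
  ext ω
  constructor
  · rintro ⟨hω, hirr, hdig⟩
    refine ⟨gaussMap ω, ⟨gaussMap_mem_Ioo hirr, irrational_gaussMap hirr, fun i => ?_⟩, ?_⟩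
    · rw [← cfDigit_succ]; exact hdig i.succ
    · rw [← hdig 0]; exact cfDigit_zero_add_gaussMap_inv hω.1.le
  · rintro ⟨t, ⟨ht, htirr, hdig⟩, rfl⟩
    have hIco : t ∈ Ico 0 1 := Ioo_subset_Ico_self ht
    have ha' : (1 : ℝ) ≤ a 0 := by exact_mod_cast ha
    refine ⟨⟨inv_pos.2 (by linarith [ht.1]), inv_lt_one_of_one_lt₀ (by linarith [ht.1])⟩, ?_,
      Fin.cases ?_ fun i => ?_⟩
    · show Irrational ((a 0 + t)⁻¹)
      rwa [irrational_inv_iff, irrational_natCast_add_iff]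
    · exact cfDigit_zero_natCast_add_inv hIco
    · rw [Fin.val_succ, cfDigit_succ, gaussMap_natCast_add_inv hIco]; exact hdig i

/-- `cfBranch a t = [0; a 0, …, a (n - 1) + t]`, the inverse of `gaussMap^[n]` on `cylinder n a`. -/
noncomputable def cfBranch : {n : ℕ} → (Fin n → ℕ) → ℝ → ℝ
  | 0, _, t => t
  | _ + 1, a, t => ((a 0 : ℝ) + cfBranch (Fin.tail a) t)⁻¹

lemma cylinder_eq_image_cfBranch {n : ℕ} (a : Fin n → ℕ) (ha : ∀ i, 1 ≤ a i) :
    cylinder n a = cfBranch a '' (Ioo 0 1 ∩ {x | Irrational x}) := by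
  induction n with
  | zero => ext ω; simp [_root_.cylinder, cfBranch]
  | succ n ih =>
    rw [cylinder_succ a (ha 0), ih (Fin.tail a) fun i => ha i.succ, image_image]
    rfl

lemma irrational_cfBranch_iff {n : ℕ} (a : Fin n → ℕ) (t : ℝ) :
    Irrational (cfBranch a t) ↔ Irrational t := by
  induction n with
  | zero => rfl
  | succ n ih => rw [cfBranch, irrational_inv_iff, irrational_natCast_add_iff, ih]

lemma cfBranch_mem_Icc {n : ℕ} {a : Fin n → ℕ} (ha : ∀ i, 1 ≤ a i) {t : ℝ} (ht : t ∈ Icc 0 1) :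
    cfBranch a t ∈ Icc 0 1 := by
  induction n with
  | zero => exact ht
  | succ n ih =>
    have h := ih (a := Fin.tail a) fun i => ha i.succ
    have ha' : (1 : ℝ) ≤ a 0 := by exact_mod_cast ha 0
    exact ⟨inv_nonneg.2 (by linarith [h.1]), inv_le_one_of_one_le₀ (by linarith [h.1])⟩

lemma image_const_add_inv_uIoo {k u v : ℝ} (hu : 0 < k + u) (hv : 0 < k + v) :
    (fun t => (k + t)⁻¹) '' uIoo u v = uIoo (k + u)⁻¹ (k + v)⁻¹ := by
  wlog huv : u ≤ v generalizing u v
  · rw [uIoo_comm, this hv hu (le_of_not_ge huv), uIoo_comm]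
  rw [uIoo_of_le huv, uIoo_of_ge (inv_anti₀ hu (by linarith))]
  ext s
  constructor
  · rintro ⟨t, ht, rfl⟩
    exact ⟨inv_strictAnti₀ (by linarith [ht.1]) (by linarith [ht.2]),
      inv_strictAnti₀ hu (by linarith [ht.1])⟩
  · rintro ⟨hvs, hsu⟩
    have hs : 0 < s := (inv_pos.2 hv).trans hvs
    refine ⟨s⁻¹ - k, ⟨?_, ?_⟩, by simp⟩
    · linarith [(lt_inv_comm₀ hs hu).1 hsu]
    · linarith [(inv_lt_comm₀ hv hs).1 hvs]

lemma image_cfBranch_Ioo {n : ℕ} {a : Fin n → ℕ} (ha : ∀ i, 1 ≤ a i) :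
    cfBranch a '' Ioo 0 1 = uIoo (cfBranch a 0) (cfBranch a 1) := by
  induction n with
  | zero => exact (image_id _).trans (uIoo_of_le zero_le_one).symm
  | succ n ih =>
    have ha' : (1 : ℝ) ≤ a 0 := by exact_mod_cast ha 0
    have ha_tail : ∀ i, 1 ≤ Fin.tail a i := fun i => ha i.succ
    have h0 := (cfBranch_mem_Icc ha_tail (left_mem_Icc.2 zero_le_one)).1
    have h1 := (cfBranch_mem_Icc ha_tail (right_mem_Icc.2 zero_le_one)).1
    have h : cfBranch a '' Ioo 0 1
        = (fun s => ((a 0 : ℝ) + s)⁻¹) '' (cfBranch (Fin.tail a) '' Ioo 0 1) :=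
      (image_image (fun s => ((a 0 : ℝ) + s)⁻¹) (cfBranch (Fin.tail a)) _).symm
    rw [h, ih ha_tail, image_const_add_inv_uIoo (by linarith) (by linarith)]
    rfl

lemma cylinder_eq_uIoo_inter {n : ℕ} {a : Fin n → ℕ} (ha : ∀ i, 1 ≤ a i) :
    cylinder n a = uIoo (cfBranch a 0) (cfBranch a 1) ∩ {x | Irrational x} := by
  have h : {x | Irrational x} = cfBranch a ⁻¹' {x | Irrational x} :=
    ext fun t => (irrational_cfBranch_iff a t).symm
  rw [cylinder_eq_image_cfBranch a ha, ← image_cfBranch_Ioo ha, ← image_inter_preimage, ← h]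

/-- `p / q` and `p' / q'` are the last two convergents of the digit tuple,
so that `cfBranch a t = (p + p' t) / (q + q' t)`. -/
structure Convergents where
  p : ℕ
  p' : ℕ
  q : ℕ
  q' : ℕ

def convergents : {n : ℕ} → (Fin n → ℕ) → Convergents
  | 0, _ => ⟨0, 1, 1, 0⟩
  | _ + 1, a =>
    let c := convergents (Fin.tail a)
    ⟨c.q, c.q', c.p + a 0 * c.q, c.p' + a 0 * c.q'⟩

lemma abs_convergents_det {n : ℕ} (a : Fin n → ℕ) :
    |((convergents a).p * (convergents a).q' : ℤ) - (convergents a).p' * (convergents a).q| =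
      1 := by
  induction n with
  | zero => simp [convergents]
  | succ n ih =>
    rw [← ih (Fin.tail a), ← abs_neg]
    simp only [convergents]
    push_cast
    ring_nf

lemma one_le_convergents_q {n : ℕ} {a : Fin n → ℕ} (ha : ∀ i, 1 ≤ a i) :
    1 ≤ (convergents a).q := by
  induction n with
  | zero => simp [convergents]
  | succ n ih =>
    have := ih (a := Fin.tail a) fun i => ha i.succ
    simp only [convergents]
    nlinarith [ha 0]

lemma convergents_mono {n : ℕ} {a b : Fin n → ℕ} (hab : a ≤ b) :
    (convergents a).p ≤ (convergents b).p ∧ (convergents a).p' ≤ (convergents b).p' ∧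
      (convergents a).q ≤ (convergents b).q ∧ (convergents a).q' ≤ (convergents b).q' := by
  induction n with
  | zero => simp [convergents]
  | succ n ih =>
    obtain ⟨hp, hp', hq, hq'⟩ := ih (a := Fin.tail a) (b := Fin.tail b) fun i => hab i.succ
    simp only [convergents]
    exact ⟨hq, hq', add_le_add hp (Nat.mul_le_mul (hab 0) hq),
      add_le_add hp' (Nat.mul_le_mul (hab 0) hq')⟩

lemma cfBranch_eq {n : ℕ} {a : Fin n → ℕ} (ha : ∀ i, 1 ≤ a i) {t : ℝ} (ht : 0 ≤ t) :
    cfBranch a t = ((convergents a).p + (convergents a).p' * t) /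
      ((convergents a).q + (convergents a).q' * t) := by
  induction n with
  | zero => simp [cfBranch, convergents]
  | succ n ih =>
    have ha_tail : ∀ i, 1 ≤ Fin.tail a i := fun i => ha i.succ
    have hq : (1 : ℝ) ≤ (convergents (Fin.tail a)).q := by
      exact_mod_cast one_le_convergents_q ha_tail
    have hden : (0 : ℝ) < (convergents (Fin.tail a)).q + (convergents (Fin.tail a)).q' * t := by
      positivity
    rw [cfBranch, ih ha_tail]
    simp only [convergents]
    push_cast
    rw [add_div' _ _ _ hden.ne', inv_div]
    congr 1
    ring

lemma gaussMeasure_absolutelyContinuous : gaussMeasure ≪ volume.restrict (Ioo 0 1) :=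
  withDensity_absolutelyContinuous _ _

lemma gaussMeasure_compl_Ioo : gaussMeasure (Ioo 0 1)ᶜ = 0 :=
  gaussMeasure_absolutelyContinuous <| by
    rw [Measure.restrict_apply measurableSet_Ioo.compl, compl_inter_self, measure_empty]

lemma gaussMeasure_compl_irrational : gaussMeasure {x | Irrational x}ᶜ = 0 := by
  have h : {x : ℝ | Irrational x}ᶜ = range ((↑) : ℚ → ℝ) := by ext; simp [Irrational]
  rw [h]
  exact gaussMeasure_absolutelyContinuous <| Measure.restrict_le_self.absolutelyContinuous <|
    (countable_range _).measure_zero volume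

lemma gaussMeasure_Ioo {u v : ℝ} (hu : 0 ≤ u) (huv : u ≤ v) (hv : v ≤ 1) :
    gaussMeasure (Ioo u v) = ENNReal.ofReal ((log (1 + v) - log (1 + u)) / log 2) := by
  have hpos : ∀ t ∈ Icc u v, 0 < 1 + t := fun t ht => by linarith [ht.1]
  have hderiv : ∀ t ∈ uIcc u v,
      HasDerivAt (fun s => log (1 + s) / log 2) (1 / (log 2 * (1 + t))) t := by
    intro t ht
    rw [uIcc_of_le huv] at ht
    refine ((((hasDerivAt_id t).const_add 1).log (hpos t ht).ne').div_const (log 2)).congr_deriv ?_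
    rw [id, div_div, mul_comm]
  have hcont : ContinuousOn (fun t : ℝ => 1 / (log 2 * (1 + t))) (Icc u v) :=
    continuousOn_const.div (by fun_prop) fun t ht => by have := hpos t ht; positivity
  rw [gaussMeasure, withDensity_apply _ measurableSet_Ioo,
    Measure.restrict_restrict measurableSet_Ioo,
    inter_eq_self_of_subset_left (Ioo_subset_Ioo hu hv),
    ← ofReal_integral_eq_lintegral_ofReal, ← integral_Ioc_eq_integral_Ioo,
    ← intervalIntegral.integral_of_le huv,
    intervalIntegral.integral_eq_sub_of_hasDerivAt hderiv
      ((uIcc_of_le huv ▸ hcont).intervalIntegrable), sub_div]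
  · exact hcont.integrableOn_Icc.mono_set Ioo_subset_Icc_self
  · exact ae_restrict_of_forall_mem measurableSet_Ioo fun t ht => by
      have := hpos t (Ioo_subset_Icc_self ht); positivity

instance : IsProbabilityMeasure gaussMeasure := by
  constructor
  rw [← measure_inter_conull gaussMeasure_compl_Ioo, univ_inter,
    gaussMeasure_Ioo le_rfl zero_le_one le_rfl]
  norm_num [div_self (log_pos one_lt_two).ne']

lemma gaussMeasure_uIoo {u v : ℝ} (hu : u ∈ Icc 0 1) (hv : v ∈ Icc 0 1) :
    gaussMeasure (uIoo u v) = ENNReal.ofReal (|log (1 + v) - log (1 + u)| / log 2) := by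
  rcases le_total u v with huv | hvu
  · rw [uIoo_of_le huv, gaussMeasure_Ioo hu.1 huv hv.2,
      abs_of_nonneg (sub_nonneg.2 (log_le_log (by linarith [hu.1]) (by linarith)))]
  · rw [uIoo_of_ge hvu, gaussMeasure_Ioo hv.1 hvu hu.2, abs_sub_comm,
      abs_of_nonneg (sub_nonneg.2 (log_le_log (by linarith [hv.1]) (by linarith)))]

/-- The smaller of the integers `q (q + q') (1 + x)` for the endpoints `x = p / q` and
`x = (p + p') / (q + q')` of the cylinder; they differ by `1`. -/
def Convergents.index (c : Convergents) : ℕ :=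
  min ((c.p + c.p' + c.q + c.q') * c.q) ((c.p + c.q) * (c.q + c.q'))

lemma abs_log_natCast_div_of_abs_sub_eq_one {P Q : ℕ} (h : |(P : ℤ) - Q| = 1) :
    |log ((P : ℝ) / Q)| = log (1 + ((min P Q : ℕ) : ℝ)⁻¹) := by
  have hsucc : ∀ m : ℕ, |log (((m + 1 : ℕ) : ℝ) / m)| = log (1 + (m : ℝ)⁻¹) := by
    intro m
    rcases m.eq_zero_or_pos with rfl | hm
    · simp
    · have hm' : (0 : ℝ) < m := by exact_mod_cast hm
      rw [Nat.cast_succ, add_div, div_self hm'.ne', one_div,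
        abs_of_nonneg (log_nonneg (by simp))]
  rcases (abs_eq zero_le_one).1 h with h | h
  · obtain rfl : P = Q + 1 := by omega
    rw [min_eq_right (Nat.le_succ Q), hsucc]
  · obtain rfl : Q = P + 1 := by omega
    rw [min_eq_left (Nat.le_succ P), ← hsucc, ← abs_neg, ← log_inv, inv_div]

lemma Convergents.abs_log_one_add_sub (c : Convergents) (hq : 1 ≤ c.q)
    (hdet : |(c.p * c.q' : ℤ) - c.p' * c.q| = 1) :
    |log (1 + (c.p + c.p') / (c.q + c.q')) - log (1 + c.p / c.q)| =
      log (1 + (c.index : ℝ)⁻¹) := by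
  have hq' : (1 : ℝ) ≤ c.q := by exact_mod_cast hq
  have hdet' :
      |(((c.p + c.p' + c.q + c.q') * c.q : ℕ) : ℤ) - ((c.p + c.q) * (c.q + c.q') : ℕ)| = 1 := by
    rw [← hdet, ← abs_neg]
    push_cast
    ring_nf
  rw [Convergents.index, ← abs_log_natCast_div_of_abs_sub_eq_one hdet',
    ← log_div (by positivity) (by positivity)]
  congr 2
  push_cast
  field_simp
  ring

lemma gaussMeasure_cylinder {n : ℕ} {a : Fin n → ℕ} (ha : ∀ i, 1 ≤ a i) :
    gaussMeasure (cylinder n a) =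
      ENNReal.ofReal (log (1 + ((convergents a).index : ℝ)⁻¹) / log 2) := by
  have h0 := cfBranch_eq ha (le_refl 0)
  have h1 := cfBranch_eq ha zero_le_one
  simp only [mul_zero, add_zero, mul_one] at h0 h1
  rw [cylinder_eq_uIoo_inter ha, measure_inter_conull gaussMeasure_compl_irrational,
    gaussMeasure_uIoo (cfBranch_mem_Icc ha (left_mem_Icc.2 zero_le_one))
      (cfBranch_mem_Icc ha (right_mem_Icc.2 zero_le_one)), h0, h1,
    Convergents.abs_log_one_add_sub _ (one_le_convergents_q ha) (abs_convergents_det a)]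

lemma gaussMeasure_cylinder_le {n : ℕ} {a b : Fin n → ℕ} (ha : ∀ i, 1 ≤ a i) (hab : a ≤ b) :
    gaussMeasure (cylinder n b) ≤ gaussMeasure (cylinder n a) := by
  have hb : ∀ i, 1 ≤ b i := fun i => (ha i).trans (hab i)
  obtain ⟨hp, hp', hq, hq'⟩ := convergents_mono hab
  have hindex : (convergents a).index ≤ (convergents b).index :=
    min_le_min (by gcongr) (by gcongr)
  have hpos : (0 : ℝ) < (convergents a).index := by
    have := one_le_convergents_q ha
    simp only [Convergents.index, Nat.cast_pos, lt_min_iff]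
    constructor <;> positivity
  rw [gaussMeasure_cylinder ha, gaussMeasure_cylinder hb]
  gcongr

lemma measurableSet_cylinder (n : ℕ) (a : Fin n → ℕ) : MeasurableSet (cylinder n a) := by
  have h : cylinder n a = Ioo 0 1 ∩ {x | Irrational x} ∩ ⋂ i : Fin n, cfDigit i ⁻¹' {a i} := by
    ext ω; simp [_root_.cylinder, and_assoc]
  rw [h]
  exact (measurableSet_Ioo.inter IsGδ.setOfPred_irrational.measurableSet).inter <|
    .iInter fun i => measurable_cfDigit i (measurableSet_singleton _)

lemma pairwise_disjoint_cylinder (n : ℕ) : Pairwise (Disjoint on cylinder n) := by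
  intro a b hab
  refine disjoint_left.2 fun ω ha hb => hab (funext fun i => ?_)
  rw [← ha.2.2 i, hb.2.2 i]

def digitsIn (n : ℕ) (D : Set ℕ) : Set ℝ :=
  {ω | ω ∈ Ioo 0 1 ∧ Irrational ω ∧ ∀ i : Fin n, cfDigit i ω ∈ D}

lemma digitsIn_eq_iUnion (n : ℕ) (D : Set ℕ) :
    digitsIn n D = ⋃ a : Fin n → D, cylinder n (fun i => a i) := by
  ext ω
  simp only [digitsIn, _root_.cylinder, mem_iUnion, mem_ofPred_eq]
  constructor
  · rintro ⟨hω, hirr, hD⟩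
    exact ⟨fun i => ⟨_, hD i⟩, hω, hirr, fun i => rfl⟩
  · rintro ⟨a, hω, hirr, ha⟩
    exact ⟨hω, hirr, fun i => ha i ▸ (a i).2⟩

lemma gaussMeasure_digitsIn (n : ℕ) (D : Set ℕ) :
    gaussMeasure (digitsIn n D) =
      ∑' a : Fin n → D, gaussMeasure (cylinder n (fun i => a i)) := by
  rw [digitsIn_eq_iUnion]
  exact measure_iUnion
    ((pairwise_disjoint_cylinder n).comp_of_injective Subtype.val_injective.comp_left)
    fun a => measurableSet_cylinder n _

lemma gaussMeasure_digitsIn_le {D E : Set ℕ} (σ : D → E) (hσ : Injective σ)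
    (hσ_le : ∀ d, (σ d : ℕ) ≤ d) (hσ_pos : ∀ d, 1 ≤ (σ d : ℕ)) (n : ℕ) :
    gaussMeasure (digitsIn n D) ≤ gaussMeasure (digitsIn n E) := by
  rw [gaussMeasure_digitsIn, gaussMeasure_digitsIn]
  calc ∑' a : Fin n → D, gaussMeasure (cylinder n (fun i => a i))
      ≤ ∑' a : Fin n → D, gaussMeasure (cylinder n (fun i => σ (a i))) :=
        ENNReal.tsum_le_tsum fun a =>
          gaussMeasure_cylinder_le (fun i => hσ_pos _) fun i => hσ_le _
    _ ≤ ∑' b : Fin n → E, gaussMeasure (cylinder n (fun i => b i)) :=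
        ENNReal.tsum_comp_le_tsum_of_injective hσ.comp_left
          (fun b : Fin n → E => gaussMeasure (cylinder n (fun i => b i)))

lemma gaussMeasure_digitsIn_avoid_le {x y : ℕ} (hx : 1 ≤ x) (hxy : x < y) (n : ℕ) :
    gaussMeasure (digitsIn n {d | 1 ≤ d ∧ d ≠ x}) ≤
      gaussMeasure (digitsIn n {d | 1 ≤ d ∧ d ≠ y}) := by
  let σ : {d | 1 ≤ d ∧ d ≠ x} → {d | 1 ≤ d ∧ d ≠ y} := fun d =>
    if h : (d : ℕ) = y then ⟨x, hx, hxy.ne⟩ else ⟨d, d.2.1, h⟩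
  refine gaussMeasure_digitsIn_le σ ?_ ?_ ?_ n
  · intro d e hde
    have hval := congrArg Subtype.val hde
    simp only [σ] at hval
    split_ifs at hval with hd he he
    · exact Subtype.ext (hd.trans he.symm)
    · exact absurd hval.symm e.2.2
    · exact absurd hval d.2.2
    · exact Subtype.ext hval
  · intro d
    simp only [σ]
    split_ifs with h <;> simp [h, hxy.le]
  · intro d
    simp only [σ]
    split_ifs <;> simp [hx, d.2.1]

lemma gaussMeasure_hitting (n j : ℕ) :
    gaussMeasure {ω : ℝ | Irrational ω ∧ ∃ k ∈ Finset.Icc 1 n, cfDigit (k - 1) ω = j} =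
      1 - gaussMeasure (digitsIn n {d | 1 ≤ d ∧ d ≠ j}) := by
  set H := {ω : ℝ | Irrational ω ∧ ∃ k ∈ Finset.Icc 1 n, cfDigit (k - 1) ω = j}
  have hH : H = {x | Irrational x} ∩ ⋃ k ∈ Finset.Icc 1 n, cfDigit (k - 1) ⁻¹' {j} := by
    ext ω; simp [H]
  have hmeas : MeasurableSet H := by
    rw [hH]
    exact IsGδ.setOfPred_irrational.measurableSet.inter <| .biUnion (Finset.countable_toSet _)
      fun k _ => measurable_cfDigit _ (measurableSet_singleton j)
  have hcompl : Hᶜ ∩ Ioo 0 1 ∩ {x | Irrational x} = digitsIn n {d | 1 ≤ d ∧ d ≠ j} := by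
    ext ω
    simp only [H, digitsIn, mem_inter_iff, mem_compl_iff, mem_ofPred_eq, Finset.mem_Icc]
    constructor
    · rintro ⟨⟨hnot, hω⟩, hirr⟩
      exact ⟨hω, hirr, fun i => ⟨one_le_cfDigit hω hirr i,
        fun h => hnot ⟨hirr, i + 1, ⟨by omega, by omega⟩, by simpa using h⟩⟩⟩
    · rintro ⟨hω, hirr, h⟩
      exact ⟨⟨fun ⟨_, k, hk, hd⟩ => (h ⟨k - 1, by omega⟩).2 hd, hω⟩, hirr⟩
  rw [← hcompl, measure_inter_conull gaussMeasure_compl_irrational,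
    measure_inter_conull gaussMeasure_compl_Ioo, prob_compl_eq_one_sub hmeas,
    ENNReal.sub_sub_cancel ENNReal.one_ne_top prob_le_one]

theorem gauss_measure_hitting_antitone_general
    (n : ℕ) (x y : ℕ) (hx : 1 ≤ x) (hxy : x < y) :
    gaussMeasure {ω : ℝ | Irrational ω ∧ ∃ k ∈ Finset.Icc 1 n, cfDigit (k - 1) ω = y}
      ≤ gaussMeasure {ω : ℝ | Irrational ω ∧ ∃ k ∈ Finset.Icc 1 n, cfDigit (k - 1) ω = x} := by
  rw [gaussMeasure_hitting, gaussMeasure_hitting]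
  exact tsub_le_tsub_left (gaussMeasure_digitsIn_avoid_le hx hxy n) 1

theorem gauss_measure_hitting_antitone
    (n : ℕ) (hn : 1 ≤ n) (x y : ℕ) (hx : 1 ≤ x) (hxy : x < y) :
    gaussMeasure {ω : ℝ | Irrational ω ∧ ∃ k ∈ Finset.Icc 1 n, cfDigit (k - 1) ω = y}
      ≤ gaussMeasure {ω : ℝ | Irrational ω ∧ ∃ k ∈ Finset.Icc 1 n, cfDigit (k - 1) ω = x} :=
  gauss_measure_hitting_antitone_general n x y hx hxy
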